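/- arXiv:1806.11106 — 2 statements merged into one kernel-verified Lean document; each statement's English description precedes it below -/
import Mathlib

section
/- Let ζ̄ be the P₁ nodal hat function of the triangulation of ℝ^d induced by the lattice AZ^d (so ζ̄(0)=1, ζ̄(ξ)=0 for 0≠ξ∈AZ^d, Σ_{ξ∈AZ^d} ζ̄(x-ξ) = 1). For ℓ ∈ AZ^d and ρ ∈ AZ^d define χ_{ℓ,ρ}(x) = ∫₀¹ ζ̄(ℓ + tρ - x) dt. Then for every W^{1,∞} function v̄ : ℝ^d → ℝ^m and the convolution v*(x) = ∫ ζ̄(x-z) v̄(z) dz, the finite difference satisfies D_ρ v*(ℓ) := v*(ℓ+ρ) - v*(ℓ) = ∫_{ℝ^d} χ_{ℓ,ρ}(x) (∇v̄(x) ρ) dx. -/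
open scoped BigOperators
open MeasureTheory

/-- Let `ζ̄` be the P₁ nodal hat function of the triangulation induced by
the lattice `AZ^d` (nodal values `ζ̄(0)=1`, `ζ̄(ξ)=0` for `0 ≠ ξ ∈ AZ^d`, partition of
unity), and `χ_{ℓ,ρ}(x) = ∫₀¹ ζ̄(ℓ + tρ - x) dt`. Then for any `W^{1,∞}` function `v̄` and
`v*(x) = ∫ ζ̄(x - z) v̄(z) dz`, one has
`D_ρ v*(ℓ) = v*(ℓ+ρ) - v*(ℓ) = ∫ χ_{ℓ,ρ}(x) (∇v̄(x) ρ) dx`. -/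
theorem stmt4 {d m : ℕ}
    (A : Matrix (Fin d) (Fin d) ℝ) (hA : A.det ≠ 0)
    (ζ : (Fin d → ℝ) → ℝ) (hζc : Continuous ζ) (hζs : HasCompactSupport ζ)
    (hζ0 : ζ 0 = 1)
    (hζlat : ∀ ξ : Fin d → ℤ, (fun i => (ξ i : ℝ)) ≠ 0 →
      ζ (A.mulVec fun i => (ξ i : ℝ)) = 0)
    (hpart : ∀ x : Fin d → ℝ,
      ∑' ξ : Fin d → ℤ, ζ (x - A.mulVec fun i => (ξ i : ℝ)) = 1)
    (v : (Fin d → ℝ) → (Fin m → ℝ)) (hv : Differentiable ℝ v)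
    (K : NNReal) (hlip : LipschitzWith K v)
    (ℓ ρ : Fin d → ℝ) :
    (∫ z, ζ (ℓ + ρ - z) • v z) - (∫ z, ζ (ℓ - z) • v z)
      = ∫ x, (∫ t in (0:ℝ)..1, ζ (ℓ + t • ρ - x)) • fderiv ℝ v x ρ := by
  classical
  have hDme : Measurable fun x => fderiv ℝ v x ρ := measurable_fderiv_apply_const ℝ v ρ
  have hDb : ∀ x, ‖fderiv ℝ v x ρ‖ ≤ (K : ℝ) * ‖ρ‖ := fun x =>
    le_trans ((fderiv ℝ v x).le_opNorm ρ)
      (mul_le_mul_of_nonneg_right (norm_fderiv_le_of_lipschitz ℝ hlip) (norm_nonneg ρ))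
  obtain ⟨Mζ, hMζ⟩ := hζs.exists_bound_of_continuous hζc
  have hζint : Integrable ζ := hζc.integrable_of_hasCompactSupport hζs
  have hvc : Continuous v := hv.continuous
  -- change of variables helper
  have hsub : ∀ (c : Fin d → ℝ) (w : (Fin d → ℝ) → (Fin m → ℝ)),
      (∫ z, ζ (c - z) • w z) = ∫ y, ζ y • w (c - y) := by
    intro c w
    rw [← MeasureTheory.integral_sub_left_eq_self (fun y => ζ y • w (c - y)) volume c]
    simp only [sub_sub_cancel]
  -- derivative of the shifted integral
  have key : ∀ t₀ : ℝ, HasDerivAt (fun t => ∫ y, ζ y • v (ℓ + t • ρ - y))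
      (∫ y, ζ y • (fderiv ℝ v (ℓ + t₀ • ρ - y)) ρ) t₀ := by
    intro t₀
    have hF'meas : AEStronglyMeasurable
        (fun y => ζ y • (fderiv ℝ v (ℓ + t₀ • ρ - y)) ρ) volume :=
      (hζc.measurable.smul
        (hDme.comp ((continuous_const.sub continuous_id).measurable))).aestronglyMeasurable
    refine (hasDerivAt_integral_of_dominated_loc_of_deriv_le
      (F := fun t y => ζ y • v (ℓ + t • ρ - y))
      (F' := fun t y => ζ y • (fderiv ℝ v (ℓ + t • ρ - y)) ρ)
      (bound := fun y => ‖ζ y‖ * ((K : ℝ) * ‖ρ‖)) (Metric.ball_mem_nhds t₀ one_pos) ?_ ?_ hF'meas ?_ ?_ ?_).2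
    · filter_upwards with t
      exact ((hζc.smul (hvc.comp (continuous_const.sub continuous_id))).aestronglyMeasurable)
    · exact (hζc.smul (hvc.comp
        (continuous_const.sub continuous_id))).integrable_of_hasCompactSupport hζs.smul_right
    · filter_upwards with y t ht
      rw [norm_smul]
      exact mul_le_mul_of_nonneg_left (hDb _) (norm_nonneg _)
    · exact hζint.norm.mul_const _
    · filter_upwards with y t ht
      have hc : HasDerivAt (fun t : ℝ => ℓ + t • ρ - y) ρ t := by
        simpa using (((hasDerivAt_id t).smul_const ρ).const_add ℓ).sub_const y
      exact ((hv _).hasFDerivAt.comp_hasDerivAt t hc).const_smul (ζ y)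
  -- joint measurability facts
  have hjm' : Measurable (Function.uncurry fun (t : ℝ) (y : Fin d → ℝ) =>
      ζ y • (fderiv ℝ v (ℓ + t • ρ - y)) ρ) := by
    apply Measurable.smul (f := fun p : ℝ × (Fin d → ℝ) => ζ p.2)
      (g := fun p : ℝ × (Fin d → ℝ) => fderiv ℝ v (ℓ + p.1 • ρ - p.2) ρ)
    · exact (hζc.comp continuous_snd).measurable
    · exact hDme.comp ((continuous_const.add
        (continuous_fst.smul continuous_const)).sub continuous_snd).measurable
  have hFmeas : StronglyMeasurable fun t : ℝ => ∫ y, ζ y • (fderiv ℝ v (ℓ + t • ρ - y)) ρ :=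
    hjm'.stronglyMeasurable.integral_prod_right'
  -- interval integrability of the derivative
  have hint : IntervalIntegrable
      (fun t => ∫ y, ζ y • (fderiv ℝ v (ℓ + t • ρ - y)) ρ) volume 0 1 := by
    rw [intervalIntegrable_iff]
    haveI : IsFiniteMeasure ((volume : Measure ℝ).restrict (Set.uIoc (0:ℝ) 1)) :=
      ⟨by simp [Measure.restrict_apply_univ, Set.uIoc_of_le (zero_le_one' ℝ)]⟩
    refine Integrable.mono' (integrable_const (∫ y, ‖ζ y‖ * ((K : ℝ) * ‖ρ‖)))
      hFmeas.aestronglyMeasurable.restrict ?_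
    filter_upwards with t
    refine norm_integral_le_of_norm_le (hζint.norm.mul_const _) ?_
    filter_upwards with y
    rw [norm_smul]
    exact mul_le_mul_of_nonneg_left (hDb _) (norm_nonneg _)
  -- FTC
  have hftc : (∫ y, ζ y • v (ℓ + (1:ℝ) • ρ - y)) - (∫ y, ζ y • v (ℓ + (0:ℝ) • ρ - y))
      = ∫ t in (0:ℝ)..1, ∫ y, ζ y • (fderiv ℝ v (ℓ + t • ρ - y)) ρ :=
    (intervalIntegral.integral_eq_sub_of_hasDerivAt (fun t _ => key t) hint).symm
  have h1 : (∫ z, ζ (ℓ + ρ - z) • v z) = ∫ y, ζ y • v (ℓ + (1:ℝ) • ρ - y) := by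
    rw [hsub (ℓ + ρ)]; simp
  have h0 : (∫ z, ζ (ℓ - z) • v z) = ∫ y, ζ y • v (ℓ + (0:ℝ) • ρ - y) := by
    rw [hsub ℓ]; simp
  have hD : ∀ t : ℝ, (∫ y, ζ y • (fderiv ℝ v (ℓ + t • ρ - y)) ρ)
      = ∫ x, ζ (ℓ + t • ρ - x) • (fderiv ℝ v x) ρ := fun t =>
    (hsub (ℓ + t • ρ) fun x => (fderiv ℝ v x) ρ).symm
  rw [h1, h0, hftc, intervalIntegral.integral_congr (fun t _ => hD t)]
  -- Fubini
  set S : Set (Fin d → ℝ) :=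
    (fun q : ℝ × (Fin d → ℝ) => ℓ + q.1 • ρ - q.2) '' (Set.Icc 0 1 ×ˢ tsupport ζ) with hS
  have hScp : IsCompact S :=
    (isCompact_Icc.prod hζs).image
      ((continuous_const.add (continuous_fst.smul continuous_const)).sub continuous_snd)
  have hSme : MeasurableSet S := hScp.measurableSet
  have hzero : ∀ t ∈ Set.Icc (0:ℝ) 1, ∀ x, x ∉ S → ζ (ℓ + t • ρ - x) = 0 := by
    intro t ht x hx
    by_contra h
    refine hx ?_
    rw [hS, Set.mem_image]
    exact ⟨(t, ℓ + t • ρ - x), ⟨ht, subset_tsupport ζ h⟩, by simp⟩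
  have hjm : Measurable (Function.uncurry fun (t : ℝ) (x : Fin d → ℝ) =>
      ζ (ℓ + t • ρ - x) • (fderiv ℝ v x) ρ) := by
    apply Measurable.smul (f := fun p : ℝ × (Fin d → ℝ) => ζ (ℓ + p.1 • ρ - p.2))
      (g := fun p : ℝ × (Fin d → ℝ) => fderiv ℝ v p.2 ρ)
    · exact (hζc.comp ((continuous_const.add
        (continuous_fst.smul continuous_const)).sub continuous_snd)).measurable
    · exact hDme.comp measurable_snd
  have hmeq : (volume.restrict (Set.Ioc (0:ℝ) 1)).prod (volume : Measure (Fin d → ℝ))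
      = ((volume : Measure ℝ).prod volume).restrict (Set.Ioc (0:ℝ) 1 ×ˢ Set.univ) := by
    rw [← Measure.prod_restrict, Measure.restrict_univ]
  have hprodint : Integrable (Function.uncurry fun (t : ℝ) (x : Fin d → ℝ) =>
      ζ (ℓ + t • ρ - x) • (fderiv ℝ v x) ρ)
      ((volume.restrict (Set.Ioc (0:ℝ) 1)).prod volume) := by
    refine Integrable.mono'
      (g := fun p : ℝ × (Fin d → ℝ) => S.indicator (fun _ => Mζ * ((K : ℝ) * ‖ρ‖)) p.2)
      ?_ hjm.aestronglyMeasurable ?_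
    · have hind : Integrable (fun p : ℝ × (Fin d → ℝ) =>
          (Set.univ ×ˢ S).indicator (fun _ => Mζ * ((K : ℝ) * ‖ρ‖)) p)
          ((volume.restrict (Set.Ioc (0:ℝ) 1)).prod volume) := by
        rw [integrable_indicator_iff (MeasurableSet.univ.prod hSme)]
        refine (integrableOn_const_iff enorm_ne_top).2 (Or.inr ?_)
        rw [Measure.prod_prod, Measure.restrict_apply_univ]
        exact ENNReal.mul_lt_top measure_Ioc_lt_top hScp.measure_lt_top
      refine hind.congr ?_
      filter_upwards with p
      by_cases hp : p.2 ∈ S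
      · rw [Set.indicator_of_mem (Set.mem_prod.2 ⟨Set.mem_univ _, hp⟩), Set.indicator_of_mem hp]
      · rw [Set.indicator_of_notMem (fun hh => hp (Set.mem_prod.1 hh).2), Set.indicator_of_notMem hp]
    · rw [hmeq]
      filter_upwards [ae_restrict_mem (measurableSet_Ioc.prod MeasurableSet.univ)] with p hp
      have ht : p.1 ∈ Set.Icc (0:ℝ) 1 := Set.Ioc_subset_Icc_self hp.1
      by_cases hx : p.2 ∈ S
      · rw [Set.indicator_of_mem hx, Function.uncurry, norm_smul]
        exact mul_le_mul (hMζ _) (hDb _) (norm_nonneg _)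
          (le_trans (norm_nonneg (ζ (ℓ + p.1 • ρ - p.2))) (hMζ _))
      · rw [Set.indicator_of_notMem hx, Function.uncurry]
        simp [hzero p.1 ht p.2 hx]
  rw [intervalIntegral.integral_of_le zero_le_one,
    MeasureTheory.integral_integral_swap hprodint]
  refine integral_congr_ae ?_
  filter_upwards with x
  rw [intervalIntegral.integral_of_le zero_le_one, ← integral_smul_const]
end

section
/- Suppose the reconstruction parameters C_{ℓ;ρ,ς} satisfy the energy patch test ρ = Σ_{ς∈R} C_{ℓ;ρ,ς} ς for all ℓ ∈ Λ^i, ρ ∈ R. Then for the uniform deformation y^F with F ∈ ℝ^{m×2}, the generic a/c coupling energy per unit configuration satisfies: E^h restricted to any finite test region equals the atomistic energy, provided the effective volumes satisfy Σ_{ℓ∈Λ^{a,i}} |ν_ℓ| + Σ_{T∈T_h} ω_T = |Ω|; concretely, Σ_{ℓ∈Λ^a} V(Dy^F(ℓ)) + Σ_{ℓ∈Λ^i} ω_ℓ V^i_ℓ(y^F) + Σ_{T∈T_h} ω_T W(∇y^F|_T) = (det A)^{-1} |Ω| · V(F·R). -/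
open scoped BigOperators

/-- `mvec F ρ` is the matrix-vector product `Fρ` for `F ∈ ℝ^{m×d}`. -/
def mvec {m d : ℕ} (F : Fin m → Fin d → ℝ) (ρ : Fin d → ℝ) : Fin m → ℝ :=
  fun α => ∑ j, F α j * ρ j

/-- Under the energy patch test `Σ_ς C_{ℓ;ρ,ς} ς = ρ`, for the uniform
deformation `y^F` (with stencil `D_ς y^F = Fς`), the generic a/c energy
`Σ_{Λ^a} V(Dy^F) + Σ_{Λ^i} ω_ℓ V^i_ℓ(y^F) + Σ_T ω_T W(F)` equals
`(det A)⁻¹ |Ω| V(F·R)`, provided the effective volumes satisfy the partition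
`Σ_{ℓ∈Λ^{a,i}} |ν_ℓ| + Σ_T ω_T = |Ω|` (atomistic cells have volume `det A`, interface
cells `ω_ℓ det A`), where `W(F) = (det A)⁻¹ V(F·R)` and `V^i_ℓ(y) = V(C_ℓ · Dy(ℓ))`. -/
theorem stmt12 {m : ℕ} {ι : Type*}
    (A : Matrix (Fin 2) (Fin 2) ℝ) (hA : 0 < A.det)
    (R : Finset (Fin 2 → ℝ)) (V : (↥R → (Fin m → ℝ)) → ℝ)
    (La Li : Finset (Fin 2 → ℝ)) (Th : Finset ι)
    (ωI : (Fin 2 → ℝ) → ℝ) (ωT : ι → ℝ) (Ωvol : ℝ)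
    (C : (Fin 2 → ℝ) → ↥R → ↥R → ℝ)
    (hvol : (La.card : ℝ) * A.det + (∑ ℓ ∈ Li, ωI ℓ) * A.det + ∑ T ∈ Th, ωT T = Ωvol)
    (hpatch : ∀ ℓ ∈ Li, ∀ ρ : ↥R,
      ∑ ς : ↥R, C ℓ ρ ς • (ς : Fin 2 → ℝ) = (ρ : Fin 2 → ℝ))
    (F : Fin m → Fin 2 → ℝ) :
    (La.card : ℝ) * V (fun ρ => mvec F ↑ρ)
      + (∑ ℓ ∈ Li, ωI ℓ * V (fun ρ => ∑ ς : ↥R, C ℓ ρ ς • mvec F ↑ς))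
      + (∑ T ∈ Th, ωT T) * ((A.det)⁻¹ * V (fun ρ => mvec F ↑ρ))
      = (A.det)⁻¹ * Ωvol * V (fun ρ => mvec F ↑ρ) := by
  have key : ∀ ℓ ∈ Li, (fun ρ : ↥R => ∑ ς : ↥R, C ℓ ρ ς • mvec F ↑ς)
      = (fun ρ : ↥R => mvec F ↑ρ) := by
    intro ℓ hℓ
    funext ρ
    have h := hpatch ℓ hℓ ρ
    funext α
    have : ∀ ς : ↥R, (C ℓ ρ ς • mvec F ↑ς) α = ∑ j, F α j * (C ℓ ρ ς * (ς : Fin 2 → ℝ) j) := by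
      intro ς
      simp only [mvec, Pi.smul_apply, smul_eq_mul, Finset.mul_sum]
      congr 1; funext j; ring
    simp only [Finset.sum_apply, this, mvec]
    rw [Finset.sum_comm]
    congr 1
    funext j
    rw [← Finset.mul_sum]
    congr 1
    have := congrFun h j
    simpa [Finset.sum_apply] using this
  rw [Finset.sum_congr rfl (fun ℓ hℓ => by rw [key ℓ hℓ])]
  rw [← Finset.sum_mul]
  subst hvol
  field_simp
end
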